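/- In the CoinPusher system, if the mempool of σ is empty, then MEV CoinPusher σ equals the contract balance σ.s.bal τ₀; moreover the trace consisting of the single adversarial move push(Adv, threshold) achieves this gain. -/
import Mathlib


open scoped NNReal

/-! The CoinPusher contract: one token type τ₀ (priced at 1), a positive
winning threshold, a contract balance, a cumulative honest wallet, and a
mempool of `push` transactions. A transaction `push P v` transfers `v > 0`
tokens from `P` to the contract (failing if an honest `P` lacks the funds;
the adversary has unbounded funds); if the resulting balance reaches the
threshold, the whole balance is immediately paid back to `P`. -/

inductive Participant where
  | Hon : String → Participant
  | Adv : Participant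
deriving DecidableEq

inductive Token where
  | τ₀ : Token
deriving DecidableEq

abbrev TxId := ℕ

/-- A `push` transaction: participant `P` sends `v > 0` tokens to the contract. -/
structure Tx where
  P : Participant
  v : ℝ
  v_pos : 0 < v

/-- The honest part of the system state. -/
structure CPState where
  threshold : ℝ≥0
  threshold_pos : 0 < threshold
  bal : Token → ℝ≥0
  wal : Token → ℝ≥0
  mempool : List (TxId × Tx)

/-- System state: adversary wallet plus honest state. -/
structure CPSys where
  Δ : Token → ℝ
  s : CPState

/-- Semantics of a `push P v` transaction. -/
noncomputable def pushSem (P : Participant) (v : ℝ) (σ : CPSys) : Option CPSys :=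
  if 0 < v ∧ (P = .Adv ∨ v ≤ (σ.s.wal .τ₀ : ℝ)) then
    let newbal : ℝ≥0 := σ.s.bal .τ₀ + v.toNNReal
    -- if the threshold is reached, the whole balance is paid back to P
    let payout : ℝ≥0 := if σ.s.threshold ≤ newbal then newbal else 0
    some { Δ := if P = .Adv then fun τ => σ.Δ τ - v + (payout : ℝ) else σ.Δ
         , s := { threshold := σ.s.threshold
                , threshold_pos := σ.s.threshold_pos
                , bal := fun _ => newbal - payout
                , wal := if P = .Adv then σ.s.wal
                         else fun τ => σ.s.wal τ - v.toNNReal + payout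
                , mempool := σ.s.mempool } }
  else none

/-- Adversarial moves: craft an adversary-signed push, or execute a mempool
transaction. -/
inductive Move where
  | adv : (v : ℝ) → 0 < v → Move
  | mempool : TxId → Move

/-- Semantics of adversarial moves. A successfully executed mempool transaction
is removed from the mempool. -/
noncomputable def semMove (σ : CPSys) : Move → Option CPSys
  | .adv v _ => pushSem .Adv v σ
  | .mempool id =>
    match σ.s.mempool.find? (fun p => p.1 == id) with
    | none => none
    | some (_, tx) =>
      match pushSem tx.P tx.v σ with
      | none => none
      | some σ' =>
        some { Δ := σ'.Δ
             , s := { threshold := σ'.s.threshold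
                    , threshold_pos := σ'.s.threshold_pos
                    , bal := σ'.s.bal, wal := σ'.s.wal
                    , mempool := σ.s.mempool.filter (fun p => p.1 != id) } }

/-- Composed effect of a list of moves (failing moves are skipped). -/
noncomputable def semMoves (σ : CPSys) : List Move → CPSys
  | [] => σ
  | m :: ms =>
    match semMove σ m with
    | none => semMoves σ ms
    | some σ' => semMoves σ' ms

/-- Adversarial gain of a list of moves (token τ₀ has unit price). -/
noncomputable def gainMoves (σ : CPSys) (tr : List Move) : ℝ :=
  (semMoves σ tr).Δ .τ₀ - σ.Δ .τ₀

/-- Maximal extractable value. -/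
structure MEV (σ : CPSys) (v : ℝ) : Prop where
  trace_reaches_v : ∃ tr, gainMoves σ tr = v
  other_traces_worse : ∀ tr, gainMoves σ tr ≤ v

lemma pushSem_adv_inv (σ σ' : CPSys) (v : ℝ)
    (h : pushSem .Adv v σ = some σ') :
    σ'.s.mempool = σ.s.mempool ∧
    σ'.Δ .τ₀ + (σ'.s.bal .τ₀ : ℝ) = σ.Δ .τ₀ + σ.s.bal .τ₀ := by
  unfold pushSem at h
  split at h
  case isFalse => exact absurd h (by simp)
  case isTrue hc =>
    obtain ⟨hv, -⟩ := hc
    simp only [Option.some.injEq] at h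
    subst h
    refine ⟨rfl, ?_⟩
    simp only [if_pos rfl]
    set newbal : ℝ≥0 := σ.s.bal .τ₀ + v.toNNReal with hnb
    by_cases hth : σ.s.threshold ≤ newbal
    · simp only [if_pos hth]
      have : newbal - newbal = 0 := tsub_self _
      rw [this]
      push_cast [hnb]
      rw [Real.coe_toNNReal _ hv.le]
      ring
    · simp only [if_neg hth]
      have : newbal - 0 = newbal := tsub_zero _
      rw [this]
      push_cast [hnb]
      rw [Real.coe_toNNReal _ hv.le]
      ring

lemma semMoves_inv (tr : List Move) : ∀ (σ : CPSys), σ.s.mempool = [] →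
    (semMoves σ tr).s.mempool = [] ∧
    (semMoves σ tr).Δ .τ₀ + ((semMoves σ tr).s.bal .τ₀ : ℝ)
      = σ.Δ .τ₀ + σ.s.bal .τ₀ := by
  induction tr with
  | nil => intro σ h; exact ⟨h, rfl⟩
  | cons m ms ih =>
    intro σ h
    cases m with
    | adv v hv =>
      simp only [semMoves, semMove]
      cases hps : pushSem .Adv v σ with
      | none => exact ih σ h
      | some σ' =>
        obtain ⟨h1, h2⟩ := pushSem_adv_inv σ σ' v hps
        obtain ⟨h3, h4⟩ := ih σ' (h1.trans h)
        exact ⟨h3, by rw [h4, h2]⟩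
    | mempool id =>
      simp only [semMoves, semMove, h, List.find?_nil]
      exact ih σ h

/-- If the mempool is empty, the MEV of the CoinPusher equals the contract
balance, and it is achieved by the single adversarial move pushing the
threshold amount. -/
theorem MEV_CoinPusher_empty (σ : CPSys) (hmp : σ.s.mempool = []) :
    MEV σ (σ.s.bal .τ₀ : ℝ) ∧
    gainMoves σ [Move.adv (σ.s.threshold : ℝ) (by exact_mod_cast σ.s.threshold_pos)]
      = (σ.s.bal .τ₀ : ℝ) := by
  have hpos : (0:ℝ) < σ.s.threshold := by exact_mod_cast σ.s.threshold_pos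
  have hgain : gainMoves σ [Move.adv (σ.s.threshold : ℝ) hpos] = (σ.s.bal .τ₀ : ℝ) := by
    unfold gainMoves
    simp only [semMoves, semMove, pushSem,
      if_pos (show 0 < (σ.s.threshold:ℝ) ∧ (Participant.Adv = Participant.Adv ∨
        (σ.s.threshold:ℝ) ≤ (σ.s.wal .τ₀ : ℝ)) from ⟨hpos, Or.inl rfl⟩)]
    simp only [Real.toNNReal_coe, if_pos (le_add_self : σ.s.threshold ≤ σ.s.bal .τ₀ + σ.s.threshold), if_pos rfl]
    simp only [true_or, and_true, if_pos hpos]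
    push_cast
    ring
  refine ⟨⟨⟨_, hgain⟩, ?_⟩, hgain⟩
  intro tr
  obtain ⟨-, h2⟩ := semMoves_inv tr σ hmp
  have : (0:ℝ) ≤ (semMoves σ tr).s.bal .τ₀ := NNReal.coe_nonneg _
  unfold gainMoves
  linarith
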